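/- Let H ∈ {0,1}^{m×n} ⊆ ℤ^{m×n}, m < n, and S a size-(m+1) subset of columns. The perm-vector ω based on S (ω_i = perm_ℤ(H_{S∖i}) for i ∈ S, 0 otherwise) reduced mod 2 is a codeword of the binary code C = ker_{𝔽₂}(H). -/
import Mathlib

open Matrix BigOperators

/-- The perm-vector of `H` based on a size-`(m+1)` column subset `S`. -/
def permVec {m n : ℕ} (H : Matrix (Fin m) (Fin n) ℤ) (S : Finset (Fin n))
    (hS : S.card = m + 1) : Fin n → ℤ :=
  fun i =>
    if hi : i ∈ S then
      (H.submatrix id (fun k =>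
          (((S.erase i).orderIsoOfFin
            (by simp [Finset.card_erase_of_mem hi, hS]) k : Fin n)))).permanent
    else 0

lemma cast_permanent {k : ℕ} (M : Matrix (Fin k) (Fin k) ℤ) :
    ((M.permanent : ℤ) : ZMod 2) = (M.map (Int.cast : ℤ → ZMod 2)).det := by
  rw [Matrix.permanent, Matrix.det_apply]
  push_cast
  refine Finset.sum_congr rfl fun σ _ => ?_
  rcases Int.units_eq_one_or (Equiv.Perm.sign σ) with h | h <;>
    simp [h, Matrix.map_apply, Units.smul_def, CharTwo.neg_eq]

/-- The perm-vector reduced mod 2 is a codeword of `ker_{𝔽₂}(H)`. -/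
theorem stmt6 {m n : ℕ} (hmn : m < n) (H : Matrix (Fin m) (Fin n) ℤ)
    (hH : ∀ j i, H j i = 0 ∨ H j i = 1)
    (S : Finset (Fin n)) (hS : S.card = m + 1) :
    (H.map (Int.cast : ℤ → ZMod 2)).mulVec
      (fun i => ((permVec H S hS i : ℤ) : ZMod 2)) = 0 := by
  funext j
  have hcoe : ∀ i : Fin (m+1), (S.orderIsoOfFin hS i : Fin n) = S.orderEmbOfFin hS i :=
    fun i => Finset.coe_orderIsoOfFin_apply S hS i
  set σ : Fin (m+1) → Fin n := fun i => S.orderEmbOfFin hS i with hσdef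
  have hσmono : StrictMono σ := (S.orderEmbOfFin hS).strictMono
  have hσS : ∀ i, σ i ∈ S := fun i => Finset.orderEmbOfFin_mem S hS i
  -- the (m+1)×(m+1) matrix with row j duplicated on top
  set A : Matrix (Fin (m+1)) (Fin (m+1)) (ZMod 2) :=
    Matrix.of (fun r k => Fin.cases ((H j (σ k) : ZMod 2))
      (fun r' => ((H r' (σ k) : ZMod 2))) r) with hA
  have hdetA : A.det = 0 := by
    apply Matrix.det_zero_of_row_eq (i := (0 : Fin (m+1))) (j := j.succ)
    · exact (Fin.succ_ne_zero j).symm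
    · funext k
      simp [hA]
  -- Laplace expansion
  have hlap := Matrix.det_succ_row_zero A
  rw [hdetA] at hlap
  -- compute the mulVec entry
  have key : ∀ k : Fin (m+1),
      ((permVec H S hS (σ k) : ℤ) : ZMod 2) = (A.submatrix Fin.succ k.succAbove).det := by
    intro k
    have hmem : σ k ∈ S := hσS k
    rw [permVec, dif_pos hmem, cast_permanent]
    congr 1
    have hcard : (S.erase (σ k)).card = m := by
      simp [Finset.card_erase_of_mem hmem, hS]
    have huniq : (fun c : Fin m => σ (k.succAbove c)) = (S.erase (σ k)).orderEmbOfFin hcard := by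
      apply Finset.orderEmbOfFin_unique hcard
      · intro c
        refine Finset.mem_erase.2 ⟨?_, hσS _⟩
        exact fun h => Fin.succAbove_ne k c (hσmono.injective h)
      · exact hσmono.comp (Fin.strictMono_succAbove k)
    have heq : ∀ (h' : (S.erase (σ k)).card = m) (c : Fin m),
        (S.erase (σ k)).orderEmbOfFin h' c = σ (k.succAbove c) := by
      intro h' c
      rw [Subsingleton.elim h' hcard, ← huniq]
    funext r c
    simp [Matrix.map_apply, Matrix.submatrix_apply, hA, Finset.coe_orderIsoOfFin_apply, heq]
  have hsum : ∀ i : Fin n, i ∉ S → ((permVec H S hS i : ℤ) : ZMod 2) = 0 := by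
    intro i hi
    rw [permVec, dif_neg hi]
    simp
  calc (H.map (Int.cast : ℤ → ZMod 2)).mulVec
        (fun i => ((permVec H S hS i : ℤ) : ZMod 2)) j
      = ∑ i ∈ S, ((H j i : ZMod 2)) * ((permVec H S hS i : ℤ) : ZMod 2) := by
        rw [Matrix.mulVec, dotProduct]
        rw [← Finset.sum_subset (Finset.subset_univ S)]
        · rfl
        · intro i _ hi
          rw [hsum i hi]
          ring
    _ = ∑ k : Fin (m+1), ((H j (σ k) : ZMod 2)) * ((permVec H S hS (σ k) : ℤ) : ZMod 2) := by
        refine (Finset.sum_bij (fun (k : Fin (m+1)) _ => σ k) (fun k _ => hσS k)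
          (fun a _ b _ h => hσmono.injective h) ?_ (fun k _ => rfl)).symm
        intro b hb
        have : b ∈ Set.range σ := by
          rw [hσdef]
          rw [show Set.range (fun i => S.orderEmbOfFin hS i) = Set.range (S.orderEmbOfFin hS) from rfl,
            Finset.range_orderEmbOfFin]
          exact hb
        obtain ⟨a, ha⟩ := this
        exact ⟨a, Finset.mem_univ a, ha⟩
    _ = ∑ k : Fin (m+1), (-1 : ZMod 2) ^ (k : ℕ) * A 0 k * (A.submatrix Fin.succ k.succAbove).det := by
        refine Finset.sum_congr rfl fun k _ => ?_
        rw [key k]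
        have : (-1 : ZMod 2) = 1 := by decide
        simp [this, hA]
    _ = 0 := hlap.symm
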